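/- If W1 : G → B is stochastically degraded with respect to W2 : G → C, then for every d ∈ G, Z_d(W2) ≤ Z_d(W1). -/
import Mathlib


open Finset

/-- Cauchy–Schwarz: `∑ √(u i)·√(v i) ≤ √(∑ u)·√(∑ v)` for nonnegative `u, v`. -/
lemma sum_sqrt_mul_sqrt_le {ι : Type*} (s : Finset ι) (u v : ι → ℝ)
    (hu : ∀ i, 0 ≤ u i) (hv : ∀ i, 0 ≤ v i) :
    ∑ i ∈ s, Real.sqrt (u i) * Real.sqrt (v i)
      ≤ Real.sqrt (∑ i ∈ s, u i) * Real.sqrt (∑ i ∈ s, v i) := by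
  rw [← Real.sqrt_mul (Finset.sum_nonneg fun i _ => hu i)]
  rw [show (∑ i ∈ s, Real.sqrt (u i) * Real.sqrt (v i)) =
      |∑ i ∈ s, Real.sqrt (u i) * Real.sqrt (v i)| from
    (abs_of_nonneg (Finset.sum_nonneg fun i _ => by positivity)).symm]
  apply Real.abs_le_sqrt
  calc (∑ i ∈ s, Real.sqrt (u i) * Real.sqrt (v i)) ^ 2
      ≤ (∑ i ∈ s, Real.sqrt (u i) ^ 2) * (∑ i ∈ s, Real.sqrt (v i) ^ 2) :=
        Finset.sum_mul_sq_le_sq_mul_sq s _ _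
    _ = (∑ i ∈ s, u i) * (∑ i ∈ s, v i) := by
        congr 1 <;> exact Finset.sum_congr rfl fun i _ => Real.sq_sqrt (by first | exact hu i | exact hv i)

/-- The Bhattacharyya parameter `Z_d(W) = (1/q) ∑_{x ∈ G} ∑_{y} √(W(y|x) W(y|x+d))`. -/
noncomputable def Zd {G Y : Type*} [AddCommGroup G] [Fintype G] [Fintype Y]
    (W : G → Y → ℝ) (d : G) : ℝ :=
  (1 / (Fintype.card G : ℝ)) * ∑ x : G, ∑ y : Y, Real.sqrt (W x y * W (x + d) y)

/-- If `W1 : G → B` is stochastically degraded with respect to `W2 : G → C`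
(i.e. `W1 = W ∘ W2` for some channel `W : C → B`), then `Z_d(W2) ≤ Z_d(W1)` for all `d`. -/
theorem stmt_13 {G B C : Type*} [AddCommGroup G] [Fintype G] [Fintype B] [Fintype C]
    (W1 : G → B → ℝ) (W2 : G → C → ℝ) (W : C → B → ℝ)
    (h1nn : ∀ a b, 0 ≤ W1 a b) (h1row : ∀ a : G, ∑ b : B, W1 a b = 1)
    (h2nn : ∀ a c, 0 ≤ W2 a c) (h2row : ∀ a : G, ∑ c : C, W2 a c = 1)
    (hWnn : ∀ c b, 0 ≤ W c b) (hWrow : ∀ c : C, ∑ b : B, W c b = 1)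
    (hdeg : ∀ (a : G) (b : B), W1 a b = ∑ c : C, W2 a c * W c b) :
    ∀ d : G, Zd W2 d ≤ Zd W1 d := by
  intro d
  unfold Zd
  apply mul_le_mul_of_nonneg_left _ (by positivity)
  apply Finset.sum_le_sum
  intro x _
  calc ∑ c : C, Real.sqrt (W2 x c * W2 (x + d) c)
      = ∑ c : C, ∑ b : B, Real.sqrt (W2 x c * W2 (x + d) c) * W c b := by
        refine Finset.sum_congr rfl fun c _ => ?_
        rw [← Finset.mul_sum, hWrow, mul_one]
    _ = ∑ b : B, ∑ c : C, Real.sqrt (W2 x c * W c b) * Real.sqrt (W2 (x + d) c * W c b) := by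
        rw [Finset.sum_comm]
        refine Finset.sum_congr rfl fun b _ => Finset.sum_congr rfl fun c _ => ?_
        rw [Real.sqrt_mul (h2nn x c), Real.sqrt_mul (h2nn (x + d) c),
            Real.sqrt_mul (h2nn x c)]
        have : Real.sqrt (W c b) * Real.sqrt (W c b) = W c b :=
          Real.mul_self_sqrt (hWnn c b)
        linear_combination Real.sqrt (W2 x c) * Real.sqrt (W2 (x + d) c) * this.symm
    _ ≤ ∑ b : B, Real.sqrt (W1 x b * W1 (x + d) b) := by
        refine Finset.sum_le_sum fun b _ => ?_
        have := sum_sqrt_mul_sqrt_le Finset.univ (fun c => W2 x c * W c b)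
          (fun c => W2 (x + d) c * W c b)
          (fun c => mul_nonneg (h2nn x c) (hWnn c b))
          (fun c => mul_nonneg (h2nn (x + d) c) (hWnn c b))
        rwa [← hdeg, ← hdeg, ← Real.sqrt_mul (h1nn x b)] at this
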